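/- arXiv:2103.11962 — 2 statements merged into one kernel-verified Lean document; each statement's English description precedes it below -/
import Mathlib

section
/- Let P be a composite interpolation matrix such that for each k: (Ψ_k Ψ_k^T) P = (Ψ_k Ψ_k^T) P (Ψ̄_k Ψ̄_k^T) (i.e., rows of P associated with region k only have nonzeros in columns associated with region k). Define the replicated-interface regional matrix ⟦P⟧ = blockdiag(Ψ_1^T P Ψ̄_1, ..., Ψ_m^T P Ψ̄_m). Then ⟦P⟧ Ψ̄^T = Ψ^T P. -/
/-!
Row `⟨k, i⟩` of `⟦P⟧ Ψ̄ᵀ` is row `i` of `Ψₖᵀ P Ψ̄ₖ Ψ̄ₖᵀ`, and row `⟨k, i⟩` of `Ψᵀ P` is row `i` of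
`Ψₖᵀ P`. Since `Ψₖ` has distinct standard basis vectors as columns, `Ψₖᵀ Ψₖ = 1`, so multiplying
the hypothesis `Ψₖ Ψₖᵀ P = Ψₖ Ψₖᵀ P Ψ̄ₖ Ψ̄ₖᵀ` on the left by `Ψₖᵀ` gives `Ψₖᵀ P = Ψₖᵀ P Ψ̄ₖ Ψ̄ₖᵀ`.
-/

open Matrix

namespace Matrix

variable {R : Type*}

theorem transpose_mul_self_of_apply_eq_ite [NonAssocSemiring R] {n ι : Type*} [Fintype n]
    [DecidableEq n] [DecidableEq ι] {Q : Matrix n ι R} {g : ι → n} (hg : Function.Injective g)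
    (hQ : ∀ i j, Q i j = if i = g j then 1 else 0) : Qᵀ * Q = 1 := by
  ext a b
  simp [mul_apply, hQ, one_apply, hg.eq_iff, eq_comm]

theorem blockDiagonal'_mul_apply [NonUnitalNonAssocSemiring R] {o p : Type*} [Fintype o]
    [DecidableEq o] {m' n' : o → Type*} [∀ k, Fintype (n' k)]
    (A : ∀ k, Matrix (m' k) (n' k) R) (B : Matrix ((k : o) × n' k) p R) (k : o) (i : m' k)
    (j : p) : (blockDiagonal' A * B) ⟨k, i⟩ j = (A k * B.submatrix (Sigma.mk k) id) i j := by
  simp only [mul_apply, ← Finset.univ_sigma_univ, Finset.sum_sigma]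
  rw [Fintype.sum_eq_single k fun l hl => by simp [blockDiagonal'_apply_ne _ _ _ hl.symm]]
  simp [blockDiagonal'_apply_eq]

end Matrix

theorem stmt6_general {n nc m : ℕ} (ι ιc : Fin m → Type)
    [∀ k, Fintype (ι k)] [∀ k, DecidableEq (ι k)]
    [∀ k, Fintype (ιc k)]
    (Ψk : ∀ k, Matrix (Fin n) (ι k) ℝ) (Ψck : ∀ k, Matrix (Fin nc) (ιc k) ℝ)
    (g : ∀ k, ι k → Fin n) (hg : ∀ k, Function.Injective (g k))
    (hΨk : ∀ k i j, Ψk k i j = if i = g k j then 1 else 0)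
    (Ψ : Matrix (Fin n) ((k : Fin m) × ι k) ℝ) (hΨ : ∀ i p, Ψ i p = Ψk p.1 i p.2)
    (Ψc : Matrix (Fin nc) ((k : Fin m) × ιc k) ℝ) (hΨc : ∀ i p, Ψc i p = Ψck p.1 i p.2)
    (P : Matrix (Fin n) (Fin nc) ℝ)
    (hP : ∀ k, (Ψk k * (Ψk k)ᵀ) * P = (Ψk k * (Ψk k)ᵀ) * P * (Ψck k * (Ψck k)ᵀ)) :
    (Matrix.blockDiagonal' fun k => (Ψk k)ᵀ * P * Ψck k) * Ψcᵀ = Ψᵀ * P := by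
  have hrows : ∀ k, Ψᵀ.submatrix (Sigma.mk k) id = (Ψk k)ᵀ := fun k => by ext; simp [hΨ]
  have hcols : ∀ k, Ψcᵀ.submatrix (Sigma.mk k) id = (Ψck k)ᵀ := fun k => by ext; simp [hΨc]
  have hregion : ∀ k, (Ψk k)ᵀ * P * Ψck k * (Ψck k)ᵀ = (Ψk k)ᵀ * P := fun k => by
    have h := congrArg ((Ψk k)ᵀ * ·) (hP k)
    simp only [← Matrix.mul_assoc, transpose_mul_self_of_apply_eq_ite (hg k) (hΨk k),
      Matrix.one_mul] at h
    exact h.symm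
  ext ⟨k, i⟩ j
  rw [blockDiagonal'_mul_apply, hcols, hregion, ← hrows]
  rfl

theorem stmt6 {n nc m : ℕ} (ι ιc : Fin m → Type)
    [∀ k, Fintype (ι k)] [∀ k, DecidableEq (ι k)]
    [∀ k, Fintype (ιc k)] [∀ k, DecidableEq (ιc k)]
    (Ψk : ∀ k, Matrix (Fin n) (ι k) ℝ) (Ψck : ∀ k, Matrix (Fin nc) (ιc k) ℝ)
    (g : ∀ k, ι k → Fin n) (hg : ∀ k, Function.Injective (g k))
    (hΨk : ∀ k i j, Ψk k i j = if i = g k j then 1 else 0)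
    (gc : ∀ k, ιc k → Fin nc) (hgc : ∀ k, Function.Injective (gc k))
    (hΨck : ∀ k i j, Ψck k i j = if i = gc k j then 1 else 0)
    (Ψ : Matrix (Fin n) ((k : Fin m) × ι k) ℝ) (hΨ : ∀ i p, Ψ i p = Ψk p.1 i p.2)
    (Ψc : Matrix (Fin nc) ((k : Fin m) × ιc k) ℝ) (hΨc : ∀ i p, Ψc i p = Ψck p.1 i p.2)
    (P : Matrix (Fin n) (Fin nc) ℝ)
    (hP : ∀ k, (Ψk k * (Ψk k)ᵀ) * P = (Ψk k * (Ψk k)ᵀ) * P * (Ψck k * (Ψck k)ᵀ)) :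
    (Matrix.blockDiagonal' fun k => (Ψk k)ᵀ * P * Ψck k) * Ψcᵀ = Ψᵀ * P :=
  stmt6_general ι ιc Ψk Ψck g hg hΨk Ψ hΨ Ψc hΨc P hP
end

section
/- Let R be a composite restriction matrix such that for each k: R (Ψ_k Ψ_k^T) = (Ψ̄_k Ψ̄_k^T) R (Ψ_k Ψ_k^T) (i.e., columns of R associated with region k only have nonzeros in rows associated with region k). Define ⟦R⟧ = blockdiag(Ψ̄_1^T R Ψ_1, ..., Ψ̄_m^T R Ψ_m). Then Ψ̄ ⟦R⟧ = R Ψ. -/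
/-!
The column-support hypothesis says that `R Ψ_k Ψ_kᵀ` is unchanged by the projection
`Ψ̄_k Ψ̄_kᵀ`; since `Ψ_kᵀ Ψ_k = I`, multiplying by `Ψ_k` on the right cancels `Ψ_kᵀ`, so
`R Ψ_k = Ψ̄_k (Ψ̄_kᵀ R Ψ_k)`. Column block `k` of `Ψ̄ ⟦R⟧` is exactly `Ψ̄_k (Ψ̄_kᵀ R Ψ_k)`,
and column block `k` of `R Ψ` is `R Ψ_k`.
-/

open Matrix

namespace Matrix

variable {α : Type*}

theorem transpose_mul_self_submatrix_one_id [Semiring α] {l m : Type*} [Fintype m]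
    [DecidableEq l] [DecidableEq m] {g : l → m} (hg : Function.Injective g) :
    ((1 : Matrix m m α).submatrix id g)ᵀ * (1 : Matrix m m α).submatrix id g = 1 := by
  rw [transpose_submatrix, transpose_one, ← submatrix_mul _ _ _ _ _ Function.bijective_id,
    Matrix.mul_one, submatrix_one _ hg]

theorem mul_eq_mul_mul_of_mul_eq_one [Semiring α] {l m n : Type*} [Fintype l] [Fintype m]
    [Fintype n] [DecidableEq n] {A : Matrix l m α} {P : Matrix l l α} {Q : Matrix m n α}
    {Q' : Matrix n m α}
    (hQ : Q' * Q = 1) (h : A * (Q * Q') = P * A * (Q * Q')) : A * Q = P * (A * Q) := by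
  simpa only [Matrix.mul_assoc, hQ, Matrix.mul_one] using congrArg (· * Q) h

theorem mul_blockDiagonal'_apply [NonUnitalNonAssocSemiring α] {l o : Type*} {n p : o → Type*}
    [Fintype o] [DecidableEq o] [∀ k, Fintype (n k)] (M : Matrix l (Σ k, n k) α)
    (B : ∀ k, Matrix (n k) (p k) α) (i : l) (k : o) (j : p k) :
    (M * blockDiagonal' B) i ⟨k, j⟩ = ∑ j', M i ⟨k, j'⟩ * B k j' j := by
  rw [mul_apply, ← Finset.univ_sigma_univ, Finset.sum_sigma, Fintype.sum_eq_single k]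
  · simp only [blockDiagonal'_apply_eq]
  · intro k' hk'
    exact Finset.sum_eq_zero fun j' _ => by rw [blockDiagonal'_apply_ne _ _ _ hk', mul_zero]

end Matrix

theorem stmt7_general {n nc m : ℕ} (ι ιc : Fin m → Type)
    [∀ k, Fintype (ι k)] [∀ k, DecidableEq (ι k)]
    [∀ k, Fintype (ιc k)]
    (Ψk : ∀ k, Matrix (Fin n) (ι k) ℝ) (Ψck : ∀ k, Matrix (Fin nc) (ιc k) ℝ)
    (g : ∀ k, ι k → Fin n) (hg : ∀ k, Function.Injective (g k))
    (hΨk : ∀ k i j, Ψk k i j = if i = g k j then 1 else 0)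
    (Ψ : Matrix (Fin n) ((k : Fin m) × ι k) ℝ) (hΨ : ∀ i p, Ψ i p = Ψk p.1 i p.2)
    (Ψc : Matrix (Fin nc) ((k : Fin m) × ιc k) ℝ) (hΨc : ∀ i p, Ψc i p = Ψck p.1 i p.2)
    (R : Matrix (Fin nc) (Fin n) ℝ)
    (hR : ∀ k, R * (Ψk k * (Ψk k)ᵀ) = (Ψck k * (Ψck k)ᵀ) * R * (Ψk k * (Ψk k)ᵀ)) :
    Ψc * (Matrix.blockDiagonal' fun k => (Ψck k)ᵀ * R * Ψk k) = R * Ψ := by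
  ext i ⟨k, j⟩
  have hΨk_eq : Ψk k = (1 : Matrix (Fin n) (Fin n) ℝ).submatrix id (g k) := by
    ext i' j'
    simp only [hΨk, submatrix_apply, id, one_apply]
  have hΨk_orth : (Ψk k)ᵀ * Ψk k = 1 := by
    rw [hΨk_eq]
    exact transpose_mul_self_submatrix_one_id (hg k)
  have hRk := mul_eq_mul_mul_of_mul_eq_one hΨk_orth (hR k)
  calc (Ψc * blockDiagonal' fun k => (Ψck k)ᵀ * R * Ψk k) i ⟨k, j⟩
      = (Ψck k * ((Ψck k)ᵀ * R * Ψk k)) i j := by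
        rw [mul_blockDiagonal'_apply, mul_apply]
        simp only [hΨc]
    _ = (R * Ψk k) i j := by
        rw [hRk]
        simp only [Matrix.mul_assoc]
    _ = (R * Ψ) i ⟨k, j⟩ := by simp only [mul_apply, hΨ]

theorem stmt7 {n nc m : ℕ} (ι ιc : Fin m → Type)
    [∀ k, Fintype (ι k)] [∀ k, DecidableEq (ι k)]
    [∀ k, Fintype (ιc k)] [∀ k, DecidableEq (ιc k)]
    (Ψk : ∀ k, Matrix (Fin n) (ι k) ℝ) (Ψck : ∀ k, Matrix (Fin nc) (ιc k) ℝ)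
    (g : ∀ k, ι k → Fin n) (hg : ∀ k, Function.Injective (g k))
    (hΨk : ∀ k i j, Ψk k i j = if i = g k j then 1 else 0)
    (gc : ∀ k, ιc k → Fin nc) (hgc : ∀ k, Function.Injective (gc k))
    (hΨck : ∀ k i j, Ψck k i j = if i = gc k j then 1 else 0)
    (Ψ : Matrix (Fin n) ((k : Fin m) × ι k) ℝ) (hΨ : ∀ i p, Ψ i p = Ψk p.1 i p.2)
    (Ψc : Matrix (Fin nc) ((k : Fin m) × ιc k) ℝ) (hΨc : ∀ i p, Ψc i p = Ψck p.1 i p.2)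
    (R : Matrix (Fin nc) (Fin n) ℝ)
    (hR : ∀ k, R * (Ψk k * (Ψk k)ᵀ) = (Ψck k * (Ψck k)ᵀ) * R * (Ψk k * (Ψk k)ᵀ)) :
    Ψc * (Matrix.blockDiagonal' fun k => (Ψck k)ᵀ * R * Ψk k) = R * Ψ :=
  stmt7_general ι ιc Ψk Ψck g hg hΨk Ψ hΨ Ψc hΨc R hR
end
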